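/- arXiv:1606.03009 — 6 statements merged into one kernel-verified Lean document; each statement's English description precedes it below -/
import Mathlib

section
/- Let α > 0, β ≠ 0, δ ∈ ℝ. Then the discriminant of the quadratic polynomial p(σ) = σ² − ((α + 1)β² + δ)/(αβ²) · σ + δ/(αβ²), namely (α + 1)²β⁴ − 2(α − 1)β²δ + δ² (up to the positive factor 1/(αβ²)²), is strictly positive for every real δ. Consequently p(σ) always has two distinct real roots. -/
/-! The discriminant is a sum of squares,
`(α + 1)²β⁴ − 2(α − 1)β²δ + δ² = (δ − (α − 1)β²)² + 4αβ⁴`, whose second term is positive. It is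
the discriminant of `αβ²σ² − ((α + 1)β² + δ)σ + δ`, and `p` is that quadratic divided by `αβ²`,
which rescales the discriminant by `1/(αβ²)²`; so `p` has two distinct real roots. -/

theorem discrim_div_div {K : Type*} [Field K] {a : K} (ha : a ≠ 0) (b c : K) :
    discrim 1 (b / a) (c / a) = discrim a b c / a ^ 2 := by
  unfold discrim
  field_simp

theorem exists_ne_quadratic_eq_zero_of_discrim_pos {a b c : ℝ} (ha : a ≠ 0)
    (h : 0 < discrim a b c) :
    ∃ x y, x ≠ y ∧ a * (x * x) + b * x + c = 0 ∧ a * (y * y) + b * y + c = 0 := by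
  set s := √(discrim a b c)
  have hs : discrim a b c = s * s := (Real.mul_self_sqrt h.le).symm
  have hs0 : s ≠ 0 := (Real.sqrt_pos.mpr h).ne'
  refine ⟨(-b + s) / (2 * a), (-b - s) / (2 * a), ?_,
    (quadratic_eq_zero_iff ha hs _).mpr (.inl rfl), (quadratic_eq_zero_iff ha hs _).mpr (.inr rfl)⟩
  intro hxy
  field_simp at hxy
  exact hs0 (by linarith)

theorem two_mass_discriminant_eq_sq_add (α β δ : ℝ) :
    (α + 1) ^ 2 * β ^ 4 - 2 * (α - 1) * β ^ 2 * δ + δ ^ 2 =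
      (δ - (α - 1) * β ^ 2) ^ 2 + 4 * α * β ^ 4 := by
  ring

/-- For `α > 0`, `β ≠ 0` and every real `δ`, the discriminant
`(α+1)²β⁴ − 2(α−1)β²δ + δ²` of `p(σ) = σ² − ((α+1)β² + δ)/(αβ²) σ + δ/(αβ²)` is strictly
positive; consequently `p` always has two distinct real roots. -/
theorem discriminant_positive (α β : ℝ) (hα : 0 < α) (hβ : β ≠ 0) (δ : ℝ) :
    0 < (α + 1) ^ 2 * β ^ 4 - 2 * (α - 1) * β ^ 2 * δ + δ ^ 2 ∧
    ∃ σ₁ σ₂ : ℝ, σ₁ ≠ σ₂ ∧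
      σ₁ ^ 2 - ((α + 1) * β ^ 2 + δ) / (α * β ^ 2) * σ₁ + δ / (α * β ^ 2) = 0 ∧
      σ₂ ^ 2 - ((α + 1) * β ^ 2 + δ) / (α * β ^ 2) * σ₂ + δ / (α * β ^ 2) = 0 := by
  have hD : 0 < (α + 1) ^ 2 * β ^ 4 - 2 * (α - 1) * β ^ 2 * δ + δ ^ 2 := by
    rw [two_mass_discriminant_eq_sq_add]
    positivity
  have hk : α * β ^ 2 ≠ 0 := by positivity
  have hdiscrim : 0 < discrim 1 (-((α + 1) * β ^ 2 + δ) / (α * β ^ 2)) (δ / (α * β ^ 2)) := by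
    have hscaled : discrim (α * β ^ 2) (-((α + 1) * β ^ 2 + δ)) δ =
        (α + 1) ^ 2 * β ^ 4 - 2 * (α - 1) * β ^ 2 * δ + δ ^ 2 := by
      unfold discrim
      ring
    rw [discrim_div_div hk, hscaled]
    positivity
  obtain ⟨σ₁, σ₂, hne, h₁, h₂⟩ := exists_ne_quadratic_eq_zero_of_discrim_pos one_ne_zero hdiscrim
  refine ⟨hD, σ₁, σ₂, hne, ?_, ?_⟩
  · linear_combination h₁
  · linear_combination h₂
end

section
/- Let α > 0 and β ≠ 0 be real. The quadratic polynomial p(σ) = σ² − ((α + 1)β² + δ)/(αβ²) · σ + δ/(αβ²) has two distinct real strictly positive roots if and only if δ > 0. -/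
/-!
A monic quadratic `σ² - b σ + c` has two distinct positive roots exactly when `b > 0`, `c > 0`
and its discriminant `b² - 4c` is positive (Vieta). Here `c = δ/(αβ²)` has the sign of `δ`, and
`(αβ²)² (b² - 4c) = ((α - 1)β² - δ)² + 4αβ⁴` is positive whatever `δ` is, so only `c > 0` matters.
-/

theorem add_eq_and_mul_eq_of_quadratic_roots {b c x y : ℝ} (hxy : x ≠ y)
    (hx : x ^ 2 - b * x + c = 0) (hy : y ^ 2 - b * y + c = 0) :
    x + y = b ∧ x * y = c := by
  have hsum : x + y = b := by
    have hfactor : (x - y) * (x + y - b) = 0 := by linear_combination hx - hy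
    have := (mul_eq_zero.mp hfactor).resolve_left (sub_ne_zero.mpr hxy)
    linarith
  exact ⟨hsum, by linear_combination -hx + x * hsum⟩

theorem exists_two_pos_roots_iff (b c : ℝ) :
    (∃ x y : ℝ, x ≠ y ∧ 0 < x ∧ 0 < y ∧ x ^ 2 - b * x + c = 0 ∧ y ^ 2 - b * y + c = 0) ↔
      0 < b ∧ 0 < c ∧ 4 * c < b ^ 2 := by
  constructor
  · rintro ⟨x, y, hxy, hx, hy, hrx, hry⟩
    obtain ⟨rfl, rfl⟩ := add_eq_and_mul_eq_of_quadratic_roots hxy hrx hry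
    have hdiff : 0 < (x - y) ^ 2 := sq_pos_of_ne_zero (sub_ne_zero.mpr hxy)
    exact ⟨by positivity, by positivity, by nlinarith⟩
  · rintro ⟨hb, hc, hdisc⟩
    set s := Real.sqrt (b ^ 2 - 4 * c)
    have hs_sq : s ^ 2 = b ^ 2 - 4 * c := Real.sq_sqrt (by linarith)
    have hs_pos : 0 < s := Real.sqrt_pos.mpr (by linarith)
    have hs_lt : s < b := by nlinarith
    refine ⟨(b + s) / 2, (b - s) / 2, by linarith, by linarith, by linarith, ?_, ?_⟩ <;>
      linear_combination hs_sq / 4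

theorem stability_quadratic_discrim_pos {α β : ℝ} (hα : 0 < α) (hβ : β ≠ 0) (δ : ℝ) :
    4 * (δ / (α * β ^ 2)) < (((α + 1) * β ^ 2 + δ) / (α * β ^ 2)) ^ 2 := by
  have hdisc : (((α + 1) * β ^ 2 + δ) / (α * β ^ 2)) ^ 2 - 4 * (δ / (α * β ^ 2)) =
      (((α - 1) * β ^ 2 - δ) ^ 2 + 4 * α * β ^ 4) / (α * β ^ 2) ^ 2 := by
    field_simp
    ring
  have : 0 < (((α - 1) * β ^ 2 - δ) ^ 2 + 4 * α * β ^ 4) / (α * β ^ 2) ^ 2 := by positivity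
  linarith

/-- The quadratic `p(σ) = σ² − ((α+1)β² + δ)/(αβ²) σ + δ/(αβ²)` has two
distinct real strictly positive roots if and only if `δ > 0` (linear stability criterion). -/
theorem linear_stability_iff_delta_pos (α β : ℝ) (hα : 0 < α) (hβ : β ≠ 0) (δ : ℝ) :
    (∃ σ₁ σ₂ : ℝ, σ₁ ≠ σ₂ ∧ 0 < σ₁ ∧ 0 < σ₂ ∧
      σ₁ ^ 2 - ((α + 1) * β ^ 2 + δ) / (α * β ^ 2) * σ₁ + δ / (α * β ^ 2) = 0 ∧
      σ₂ ^ 2 - ((α + 1) * β ^ 2 + δ) / (α * β ^ 2) * σ₂ + δ / (α * β ^ 2) = 0)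
    ↔ 0 < δ := by
  have hk : 0 < α * β ^ 2 := by positivity
  rw [exists_two_pos_roots_iff]
  refine ⟨fun ⟨_, hc, _⟩ ↦ (div_pos_iff_of_pos_right hk).mp hc, fun hδ ↦ ⟨?_, ?_, ?_⟩⟩
  · exact div_pos (by positivity) hk
  · exact div_pos hδ hk
  · exact stability_quadratic_discrim_pos hα hβ δ
end

section
/- Let α > 0, β ≠ 0, δ > 0. Let A = JĤ where Ĥ is the 4×4 symmetric matrix with rows (β² + δ, −β, 0, 0), (−β, 1, 0, 0), (0, 0, 1/(αβ²), 0), (0, 0, 0, 1) and J is the standard symplectic matrix. Then A (as a complex matrix) has exactly four distinct eigenvalues, all purely imaginary: iω₁, −iω₁, iω₂, −iω₂ with ω₁ > ω₂ > 0. -/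
/-!
Writing `A = J Ĥ` out, its characteristic polynomial is the biquadratic
`μ⁴ + p μ² + q` with `p = 1 + 1/α + δ/(αβ²)` and `q = δ/(αβ²)`. As a quadratic in `μ²` it has
discriminant `p² - 4q = (1 - q)² + 1/α² + (2/α)(1 + q) > 0`, so its roots `μ² = -ω₁², -ω₂²`
are real, distinct and negative (`p, q > 0`), which gives `μ = ±iω₁, ±iω₂`.
-/

open Polynomial

section LinearizationMatrix

variable {R : Type*} [CommRing R] (c b d : R)

theorem symplectic_mul_hessian :
    (!![0, 0, 1, 0; 0, 0, 0, 1; -1, 0, 0, 0; 0, -1, 0, 0] : Matrix (Fin 4) (Fin 4) R) *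
      !![b ^ 2 + d, -b, 0, 0; -b, 1, 0, 0; 0, 0, c, 0; 0, 0, 0, 1] =
      !![0, 0, c, 0; 0, 0, 0, 1; -(b ^ 2 + d), b, 0, 0; b, -1, 0, 0] := by
  ext i j
  fin_cases i <;> fin_cases j <;> simp [Matrix.mul_apply, Fin.sum_univ_succ]

theorem charpoly_linearization :
    (!![0, 0, c, 0; 0, 0, 0, 1; -(b ^ 2 + d), b, 0, 0; b, -1, 0, 0] :
        Matrix (Fin 4) (Fin 4) R).charpoly =
      X ^ 4 + C (1 + c * (b ^ 2 + d)) * X ^ 2 + C (c * d) := by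
  rw [Matrix.charpoly, Matrix.det_succ_row_zero]
  simp [Fin.sum_univ_succ, Matrix.det_succ_row_zero, Matrix.charmatrix_apply, Fin.succAbove,
    Matrix.submatrix]
  ring

end LinearizationMatrix

theorem isRoot_biquadratic_iff (a b μ : ℂ) :
    (X ^ 4 + C (a ^ 2 + b ^ 2) * X ^ 2 + C (a ^ 2 * b ^ 2)).IsRoot μ ↔
      μ = a * Complex.I ∨ μ = -(a * Complex.I) ∨ μ = b * Complex.I ∨ μ = -(b * Complex.I) := by
  have hfactor : (X ^ 4 + C (a ^ 2 + b ^ 2) * X ^ 2 + C (a ^ 2 * b ^ 2)).eval μ =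
      (μ - a * Complex.I) * (μ + a * Complex.I) *
        ((μ - b * Complex.I) * (μ + b * Complex.I)) := by
    simp only [eval_add, eval_mul, eval_pow, eval_C, eval_X]
    linear_combination ((a ^ 2 + b ^ 2) * μ ^ 2 + a ^ 2 * b ^ 2 * (1 - Complex.I ^ 2)) *
      Complex.I_sq
  simp only [IsRoot.def, hfactor, mul_eq_zero, sub_eq_zero, add_eq_zero_iff_eq_neg, or_assoc]

/-- The square roots of the two roots of `t² - p t + q`. -/
theorem exists_sq_add_sq_eq_and_sq_mul_sq_eq {p q : ℝ} (hq : 0 < q) (hdisc : 4 * q < p ^ 2)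
    (hp : 0 < p) :
    ∃ ω₁ ω₂ : ℝ, ω₂ < ω₁ ∧ 0 < ω₂ ∧ ω₁ ^ 2 + ω₂ ^ 2 = p ∧ ω₁ ^ 2 * ω₂ ^ 2 = q := by
  set s := √(p ^ 2 - 4 * q)
  have hs_sq : s ^ 2 = p ^ 2 - 4 * q := Real.sq_sqrt (by linarith)
  have hs_pos : 0 < s := Real.sqrt_pos.mpr (by linarith)
  have hs_lt : s < p := by nlinarith
  refine ⟨√((p + s) / 2), √((p - s) / 2), Real.sqrt_lt_sqrt (by linarith) (by linarith),
    Real.sqrt_pos.mpr (by linarith), ?_, ?_⟩ <;>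
  rw [Real.sq_sqrt (by linarith), Real.sq_sqrt (by linarith)]
  · ring
  · linear_combination -hs_sq / 4

theorem four_mul_lt_sq_one_add {c b d : ℝ} (hc : 0 < c) (hb : b ≠ 0) (hd : 0 < d) :
    4 * (c * d) < (1 + c * (b ^ 2 + d)) ^ 2 := by
  have hcb : 0 < c * b ^ 2 := by positivity
  nlinarith [sq_nonneg (1 - c * d), mul_pos hcb (mul_pos hc hd)]

/-- For `δ > 0` the linearization matrix `A = JĤ`, viewed as a complex matrix,
has exactly four distinct eigenvalues, all purely imaginary: `±iω₁, ±iω₂` with `ω₁ > ω₂ > 0`. -/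
theorem four_distinct_imaginary_eigenvalues (α β δ : ℝ) (hα : 0 < α) (hβ : β ≠ 0)
    (hδ : 0 < δ)
    (Hhat J : Matrix (Fin 4) (Fin 4) ℝ)
    (hHhat : Hhat = !![β ^ 2 + δ, -β, 0, 0;
                       -β, 1, 0, 0;
                       0, 0, 1 / (α * β ^ 2), 0;
                       0, 0, 0, 1])
    (hJ : J = !![0, 0, 1, 0;
                 0, 0, 0, 1;
                 -1, 0, 0, 0;
                 0, -1, 0, 0]) :
    ∃ ω₁ ω₂ : ℝ, ω₂ < ω₁ ∧ 0 < ω₂ ∧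
      ∀ μ : ℂ, ((J * Hhat).map Complex.ofReal).charpoly.IsRoot μ ↔
        μ = (ω₁ : ℂ) * Complex.I ∨ μ = -((ω₁ : ℂ) * Complex.I) ∨
        μ = (ω₂ : ℂ) * Complex.I ∨ μ = -((ω₂ : ℂ) * Complex.I) := by
  set c := 1 / (α * β ^ 2)
  have hc : 0 < c := by positivity
  obtain ⟨ω₁, ω₂, hlt, hω₂, hsum, hprod⟩ := exists_sq_add_sq_eq_and_sq_mul_sq_eq
    (mul_pos hc hδ) (four_mul_lt_sq_one_add hc hβ hδ) (by positivity)
  refine ⟨ω₁, ω₂, hlt, hω₂, fun μ => ?_⟩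
  have hchar : ((J * Hhat).map Complex.ofReal).charpoly =
      X ^ 4 + C ((ω₁ : ℂ) ^ 2 + (ω₂ : ℂ) ^ 2) * X ^ 2 + C ((ω₁ : ℂ) ^ 2 * (ω₂ : ℂ) ^ 2) := by
    change ((J * Hhat).map Complex.ofRealHom).charpoly = _
    rw [hHhat, hJ, symplectic_mul_hessian, Matrix.charpoly_map,
      charpoly_linearization, ← hsum, ← hprod]
    simp
  rw [hchar, isRoot_biquadratic_iff]
end

section
/- Let α > 0, β ≠ 0, δ > 0 and define ω₁ = √2 · √((α + 1)β² + δ + √((α + 1)²β⁴ − 2(α − 1)β²δ + δ²)) / (2|β|√α) and ω₂ = √2 · √((α + 1)β² + δ − √((α + 1)²β⁴ − 2(α − 1)β²δ + δ²)) / (2|β|√α). Then ω₁² and ω₂² are exactly the two roots of p(σ) = σ² − ((α + 1)β² + δ)/(αβ²) σ + δ/(αβ²), and ω₁ > ω₂ > 0. -/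
/-! With `S = (α + 1)β² + δ` and `k = αβ²`, clearing the denominator `k` turns `p` into
`kσ² - Sσ + δ`, whose discriminant `S² - 4kδ` is exactly the radicand `D` under the inner root, so
the quadratic formula gives the roots `(S ± √D) / 2k`, and these are `ω₁²` and `ω₂²`.
Since `D = ((α + 1)β² - δ)² + 4β²δ > 0` and `D < S²`, we get `0 < S - √D < S + √D`, which orders
the frequencies. -/

open Real

theorem sq_sub_div_mul_add_div_eq_zero_iff {K : Type*} [Field K] [NeZero (2 : K)]
    {k S δ s : K} (hk : k ≠ 0) (hs : S ^ 2 - 4 * k * δ = s * s) (σ : K) :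
    σ ^ 2 - S / k * σ + δ / k = 0 ↔ σ = (S + s) / (2 * k) ∨ σ = (S - s) / (2 * k) := by
  have hdiscrim : discrim k (-S) δ = s * s := by rw [discrim, ← hs]; ring
  have hclear : σ ^ 2 - S / k * σ + δ / k = (k * (σ * σ) + -S * σ + δ) / k := by
    field_simp; ring
  rw [hclear, div_eq_zero_iff, or_iff_left hk, quadratic_eq_zero_iff hk hdiscrim, neg_neg]

theorem sq_sqrt_two_mul_sqrt_div {a b x : ℝ} (ha : 0 ≤ a) (hx : 0 ≤ x) :
    (√2 * √x / (2 * |b| * √a)) ^ 2 = (x / 2) / (a * b ^ 2) := by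
  rw [div_pow, mul_pow, mul_pow, mul_pow, sq_sqrt zero_le_two, sq_sqrt hx, sq_sqrt ha, sq_abs]
  ring

/-- The explicit characteristic frequencies `ω₁, ω₂` satisfy `ω₁ > ω₂ > 0`,
and `ω₁²`, `ω₂²` are exactly the two roots of
`p(σ) = σ² − ((α+1)β² + δ)/(αβ²) σ + δ/(αβ²)`. -/
theorem characteristic_frequencies (α β δ : ℝ) (hα : 0 < α) (hβ : β ≠ 0) (hδ : 0 < δ)
    (ω₁ ω₂ : ℝ)
    (hω₁ : ω₁ = Real.sqrt 2 * Real.sqrt ((α + 1) * β ^ 2 + δ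
        + Real.sqrt ((α + 1) ^ 2 * β ^ 4 - 2 * (α - 1) * β ^ 2 * δ + δ ^ 2))
      / (2 * |β| * Real.sqrt α))
    (hω₂ : ω₂ = Real.sqrt 2 * Real.sqrt ((α + 1) * β ^ 2 + δ
        - Real.sqrt ((α + 1) ^ 2 * β ^ 4 - 2 * (α - 1) * β ^ 2 * δ + δ ^ 2))
      / (2 * |β| * Real.sqrt α)) :
    (ω₁ ^ 2) ^ 2 - ((α + 1) * β ^ 2 + δ) / (α * β ^ 2) * ω₁ ^ 2 + δ / (α * β ^ 2) = 0 ∧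
    (ω₂ ^ 2) ^ 2 - ((α + 1) * β ^ 2 + δ) / (α * β ^ 2) * ω₂ ^ 2 + δ / (α * β ^ 2) = 0 ∧
    (∀ σ : ℝ, σ ^ 2 - ((α + 1) * β ^ 2 + δ) / (α * β ^ 2) * σ + δ / (α * β ^ 2) = 0 →
      σ = ω₁ ^ 2 ∨ σ = ω₂ ^ 2) ∧
    ω₂ < ω₁ ∧ 0 < ω₂ := by
  set S := (α + 1) * β ^ 2 + δ
  set D := (α + 1) ^ 2 * β ^ 4 - 2 * (α - 1) * β ^ 2 * δ + δ ^ 2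
  have hk : 0 < α * β ^ 2 := by positivity
  have hD : S ^ 2 - 4 * (α * β ^ 2) * δ = D := by ring
  have hD_pos : 0 < D := by
    have : D = ((α + 1) * β ^ 2 - δ) ^ 2 + 4 * β ^ 2 * δ := by ring
    rw [this]; positivity
  have hsqrtD_lt : √D < S := by
    have := mul_pos hk hδ
    rw [sqrt_lt' (by positivity), ← hD]
    linarith
  have hroots :=
    sq_sub_div_mul_add_div_eq_zero_iff hk.ne' (hD.trans (mul_self_sqrt hD_pos.le).symm)
  have hω₁sq : ω₁ ^ 2 = (S + √D) / (2 * (α * β ^ 2)) := by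
    rw [hω₁, sq_sqrt_two_mul_sqrt_div hα.le (by positivity), div_div]
  have hω₂sq : ω₂ ^ 2 = (S - √D) / (2 * (α * β ^ 2)) := by
    rw [hω₂, sq_sqrt_two_mul_sqrt_div hα.le (sub_nonneg.2 hsqrtD_lt.le), div_div]
  refine ⟨(hroots _).2 (.inl hω₁sq), (hroots _).2 (.inr hω₂sq),
    fun σ hσ => hω₁sq ▸ hω₂sq ▸ (hroots σ).1 hσ, ?_, ?_⟩
  · rw [hω₁, hω₂]
    have := sqrt_pos.2 hD_pos
    gcongr
    linarith
  · rw [hω₂]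
    have := sqrt_pos.2 (sub_pos.2 hsqrtD_lt)
    positivity
end

section
/- Let α > 0, β ≠ 0 and δ < 0. Then the polynomial p(λ) = λ⁴ + ((α + 1)β² + δ)/(αβ²) λ² + δ/(αβ²) has a real root λ > 0; hence the linearization matrix A = JĤ of the two-mass spring system at its equilibrium has a real strictly positive eigenvalue, and the equilibrium is linearly unstable. -/
open Polynomial

theorem exists_pos_root_quadratic_of_neg {b c : ℝ} (hc : c < 0) :
    ∃ y : ℝ, 0 < y ∧ y ^ 2 + b * y + c = 0 := by
  set s := Real.sqrt (b ^ 2 - 4 * c)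
  have hs_sq : s ^ 2 = b ^ 2 - 4 * c := Real.sq_sqrt (by nlinarith [sq_nonneg b])
  have hb_lt : b < s := by nlinarith [Real.sqrt_nonneg (b ^ 2 - 4 * c), sq_abs b, le_abs_self b]
  exact ⟨(-b + s) / 2, by linarith, by nlinarith⟩

theorem exists_pos_root_biquadratic_of_neg {b c : ℝ} (hc : c < 0) :
    ∃ x : ℝ, 0 < x ∧ x ^ 4 + b * x ^ 2 + c = 0 := by
  obtain ⟨y, hy_pos, hy_root⟩ := exists_pos_root_quadratic_of_neg (b := b) hc
  have hsq : Real.sqrt y ^ 2 = y := Real.sq_sqrt hy_pos.le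
  refine ⟨Real.sqrt y, Real.sqrt_pos.mpr hy_pos, ?_⟩
  rw [show Real.sqrt y ^ 4 = (Real.sqrt y ^ 2) ^ 2 by ring, hsq]
  exact hy_root

/-- With `J` the standard symplectic matrix, `J * diag(P, Q)` is `[[0, Q], [-P, 0]]`, whose
characteristic polynomial is `det (X² + Q P)`. -/
theorem charpoly_eval_symplectic_mul_blockDiagonal (p q r s t x : ℝ) :
    ((!![0, 0, 1, 0; 0, 0, 0, 1; -1, 0, 0, 0; 0, -1, 0, 0] : Matrix (Fin 4) (Fin 4) ℝ) *
      !![p, q, 0, 0; q, r, 0, 0; 0, 0, s, 0; 0, 0, 0, t]).charpoly.eval x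
      = x ^ 4 + (s * p + t * r) * x ^ 2 + s * t * (p * r - q ^ 2) := by
  rw [Matrix.charpoly, ← Polynomial.coe_evalRingHom, RingHom.map_det]
  rw [show (evalRingHom x).mapMatrix (Matrix.charmatrix _) =
    !![x, 0, -s, 0; 0, x, 0, -t; p, q, x, 0; q, r, 0, x] from ?_]
  · simp [Matrix.det_succ_row_zero, Fin.sum_univ_succ, Fin.succAbove]
    ring
  · ext i j
    fin_cases i <;> fin_cases j <;> simp

/-- For `δ < 0` the characteristic polynomial
`p(λ) = λ⁴ + ((α+1)β² + δ)/(αβ²) λ² + δ/(αβ²)` has a real root `λ > 0`; hence the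
linearization matrix `A = JĤ` has a real strictly positive eigenvalue (the equilibrium is
linearly unstable). -/
theorem unstable_for_delta_neg (α β δ : ℝ) (hα : 0 < α) (hβ : β ≠ 0) (hδ : δ < 0)
    (Hhat J : Matrix (Fin 4) (Fin 4) ℝ)
    (hHhat : Hhat = !![β ^ 2 + δ, -β, 0, 0;
                       -β, 1, 0, 0;
                       0, 0, 1 / (α * β ^ 2), 0;
                       0, 0, 0, 1])
    (hJ : J = !![0, 0, 1, 0;
                 0, 0, 0, 1;
                 -1, 0, 0, 0;
                 0, -1, 0, 0]) :
    ∃ lam : ℝ, 0 < lam ∧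
      lam ^ 4 + ((α + 1) * β ^ 2 + δ) / (α * β ^ 2) * lam ^ 2 + δ / (α * β ^ 2) = 0 ∧
      (J * Hhat).charpoly.IsRoot lam := by
  have hαβ : 0 < α * β ^ 2 := by positivity
  obtain ⟨lam, hlam_pos, hlam_root⟩ :=
    exists_pos_root_biquadratic_of_neg (b := ((α + 1) * β ^ 2 + δ) / (α * β ^ 2))
      (div_neg_of_neg_of_pos hδ hαβ)
  refine ⟨lam, hlam_pos, hlam_root, ?_⟩
  rw [IsRoot.def, hHhat, hJ, charpoly_eval_symplectic_mul_blockDiagonal, ← hlam_root]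
  field_simp
  ring
end

section
/- Let α > 0, β ≠ 0 and let l > 0 be a real number with α + α l⁴ − 2(α + 2) l² ≥ 0. Define δ = β²(α + α l⁴ − 2 l² + √α (l² + 1) √(α + α l⁴ − 2(α + 2) l²)) / (2 l²) (or with the minus sign before the square root), and suppose δ > 0. Let ω₁ ≥ ω₂ > 0 be the characteristic frequencies, i.e., ω₁², ω₂² are the roots of σ² − ((α + 1)β² + δ)/(αβ²) σ + δ/(αβ²). Then the frequency ratio satisfies ω₁/ω₂ = l or ω₁/ω₂ = 1/l; in particular, for l = n/m with integers n, m, the resonance relation m ω₁ − n ω₂ = 0 (or n ω₁ − m ω₂ = 0) holds. -/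
/-!
By Vieta, `ω₁² + ω₂² = ((α + 1)β² + δ)/(αβ²)` and `ω₁²ω₂² = δ/(αβ²)`. The resonance-curve
formula is the solution for `δ` of the quadratic `l²((α + 1)β² + δ)² = (l² + 1)² αβ² δ`
(squaring away the `±√` recovers it), so `l²(ω₁² + ω₂²)² = (l² + 1)² ω₁²ω₂²`. This factors as
`(ω₁² − l²ω₂²)(ω₂² − l²ω₁²) = 0`, and positivity turns either factor into a frequency ratio.
-/

theorem add_eq_and_mul_eq_of_forall_quadratic_eq {R : Type*} [CommRing R] {s p a b : R}
    (h : ∀ σ : R, σ ^ 2 - s * σ + p = (σ - a) * (σ - b)) : s = a + b ∧ p = a * b := by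
  have h0 := h 0
  have h1 := h 1
  constructor
  · linear_combination h0 - h1
  · linear_combination h0

theorem resonance_curve_sq {α β l ε δ : ℝ} (hα : 0 ≤ α) (hl : l ≠ 0)
    (hD : 0 ≤ α + α * l ^ 4 - 2 * (α + 2) * l ^ 2) (hε : ε ^ 2 = 1)
    (hδdef : δ = β ^ 2 * (α + α * l ^ 4 - 2 * l ^ 2
        + ε * Real.sqrt α * (l ^ 2 + 1)
          * Real.sqrt (α + α * l ^ 4 - 2 * (α + 2) * l ^ 2)) / (2 * l ^ 2)) :
    l ^ 2 * ((α + 1) * β ^ 2 + δ) ^ 2 = (l ^ 2 + 1) ^ 2 * (α * β ^ 2) * δ := by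
  set D := α + α * l ^ 4 - 2 * (α + 2) * l ^ 2
  have hsα : Real.sqrt α ^ 2 = α := Real.sq_sqrt hα
  have hsD : Real.sqrt D ^ 2 = D := Real.sq_sqrt hD
  have hroot : 2 * l ^ 2 * δ - β ^ 2 * (α + α * l ^ 4 - 2 * l ^ 2)
      = ε * β ^ 2 * Real.sqrt α * (l ^ 2 + 1) * Real.sqrt D := by
    rw [hδdef]
    field_simp
    ring
  have hsq : (2 * l ^ 2 * δ - β ^ 2 * (α + α * l ^ 4 - 2 * l ^ 2)) ^ 2
      = β ^ 4 * α * (l ^ 2 + 1) ^ 2 * D := by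
    rw [hroot]
    linear_combination (β ^ 4 * (l ^ 2 + 1) ^ 2 * Real.sqrt α ^ 2 * Real.sqrt D ^ 2) * hε
      + (β ^ 4 * (l ^ 2 + 1) ^ 2 * Real.sqrt D ^ 2) * hsα + (β ^ 4 * (l ^ 2 + 1) ^ 2 * α) * hsD
  have h4l : (4 * l ^ 2 : ℝ) ≠ 0 := by positivity
  refine mul_left_cancel₀ h4l ?_
  linear_combination hsq

theorem div_eq_or_div_eq_one_div_of_sq_add_sq_sq_eq {ω₁ ω₂ l : ℝ} (hω₁ : 0 < ω₁) (hω₂ : 0 < ω₂)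
    (hl : 0 < l) (h : l ^ 2 * (ω₁ ^ 2 + ω₂ ^ 2) ^ 2 = (l ^ 2 + 1) ^ 2 * (ω₁ ^ 2 * ω₂ ^ 2)) :
    ω₁ / ω₂ = l ∨ ω₁ / ω₂ = 1 / l := by
  have hfact : (ω₁ ^ 2 - (l * ω₂) ^ 2) * (ω₂ ^ 2 - (l * ω₁) ^ 2) = 0 := by
    linear_combination -h
  rcases mul_eq_zero.mp hfact with h₁ | h₂
  · rw [sub_eq_zero, sq_eq_sq₀ hω₁.le (by positivity)] at h₁
    left
    rw [h₁]
    field_simp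
  · rw [sub_eq_zero, sq_eq_sq₀ hω₂.le (by positivity)] at h₂
    right
    rw [h₂]
    field_simp

theorem resonance_curve_formula_general (α β l ε δ ω₁ ω₂ : ℝ)
    (hα : 0 < α) (hβ : β ≠ 0) (hl : 0 < l)
    (hD : 0 ≤ α + α * l ^ 4 - 2 * (α + 2) * l ^ 2)
    (hε : ε = 1 ∨ ε = -1)
    (hδdef : δ = β ^ 2 * (α + α * l ^ 4 - 2 * l ^ 2
        + ε * Real.sqrt α * (l ^ 2 + 1)
          * Real.sqrt (α + α * l ^ 4 - 2 * (α + 2) * l ^ 2)) / (2 * l ^ 2))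
    (hord : ω₂ ≤ ω₁) (hpos : 0 < ω₂)
    (hroots : ∀ σ : ℝ,
      σ ^ 2 - ((α + 1) * β ^ 2 + δ) / (α * β ^ 2) * σ + δ / (α * β ^ 2)
        = (σ - ω₁ ^ 2) * (σ - ω₂ ^ 2)) :
    ω₁ / ω₂ = l ∨ ω₁ / ω₂ = 1 / l := by
  have hε2 : ε ^ 2 = 1 := by rcases hε with rfl | rfl <;> norm_num
  have hcurve := resonance_curve_sq hα.le hl.ne' hD hε2 hδdef
  obtain ⟨hsum, hprod⟩ := add_eq_and_mul_eq_of_forall_quadratic_eq hroots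
  refine div_eq_or_div_eq_one_div_of_sq_add_sq_sq_eq (hpos.trans_le hord) hpos hl ?_
  rw [← hsum, ← hprod]
  field_simp
  linear_combination hcurve

/-- If `δ` is given by the resonance-curve formula
`δ = β²(α + αl⁴ − 2l² ± √α(l²+1)√(α + αl⁴ − 2(α+2)l²))/(2l²)` (either sign) and `δ > 0`,
then the characteristic frequencies satisfy `ω₁/ω₂ = l` or `ω₁/ω₂ = 1/l`; in particular for
`l = n/m` the resonance relation `mω₁ − nω₂ = 0` (or `nω₁ − mω₂ = 0`) holds. -/
theorem resonance_curve_formula (α β l ε δ ω₁ ω₂ : ℝ)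
    (hα : 0 < α) (hβ : β ≠ 0) (hl : 0 < l)
    (hD : 0 ≤ α + α * l ^ 4 - 2 * (α + 2) * l ^ 2)
    (hε : ε = 1 ∨ ε = -1)
    (hδdef : δ = β ^ 2 * (α + α * l ^ 4 - 2 * l ^ 2
        + ε * Real.sqrt α * (l ^ 2 + 1)
          * Real.sqrt (α + α * l ^ 4 - 2 * (α + 2) * l ^ 2)) / (2 * l ^ 2))
    (hδ : 0 < δ)
    (hord : ω₂ ≤ ω₁) (hpos : 0 < ω₂)
    (hroots : ∀ σ : ℝ,
      σ ^ 2 - ((α + 1) * β ^ 2 + δ) / (α * β ^ 2) * σ + δ / (α * β ^ 2)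
        = (σ - ω₁ ^ 2) * (σ - ω₂ ^ 2)) :
    ω₁ / ω₂ = l ∨ ω₁ / ω₂ = 1 / l :=
  resonance_curve_formula_general α β l ε δ ω₁ ω₂ hα hβ hl hD hε hδdef hord hpos hroots
end
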